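/- Let n ≥ 3 be a natural number and let C be an equitable proper coloring of the flower graph F_n that uses exactly n+1 colors, with colors indexed so that the class sizes are non-increasing. Then the equitable coloring variance of C equals (n^4+2n^3+2n^2+n)/(3(2n+1)^2). -/
import Mathlib


open Finset

/-- The size of the color class of color `i` under the coloring `c`. -/
def classSize {V : Type*} [Fintype V] {k : ℕ} (c : V → Fin k) (i : Fin k) : ℕ :=
  (Finset.univ.filter (fun v => c v = i)).card

/-- The equitable coloring mean `μ = (∑ i·θ_i)/N` (colors indexed `1,…,k`). -/
def eqMean {V : Type*} [Fintype V] {k : ℕ} (c : V → Fin k) : ℚ :=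
  (∑ i : Fin k, (((i : ℕ) : ℚ) + 1) * (classSize c i : ℚ)) / (Fintype.card V : ℚ)

/-- The equitable coloring variance `σ² = (∑ i²·θ_i)/N − μ²`. -/
def eqVar {V : Type*} [Fintype V] {k : ℕ} (c : V → Fin k) : ℚ :=
  (∑ i : Fin k, (((i : ℕ) : ℚ) + 1) ^ 2 * (classSize c i : ℚ)) / (Fintype.card V : ℚ)
    - (eqMean c) ^ 2

/-- The flower graph `F_n`: the helm graph together with edges joining every pendant
vertex `u_i` to the central vertex. -/
def flowerGraph (n : ℕ) : SimpleGraph (Option (Fin n ⊕ Fin n)) :=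
  SimpleGraph.fromRel (fun a b =>
    match a, b with
    | none, some _ => True
    | some (Sum.inl i), some (Sum.inl j) => j.val = (i.val + 1) % n
    | some (Sum.inl i), some (Sum.inr j) => i = j
    | _, _ => False)

lemma s1q (n : ℕ) : ∑ i ∈ range n, ((i:ℚ)+1) = (n*(n+1)/2 : ℚ) := by
  induction n with
  | zero => simp
  | succ m ih => rw [Finset.sum_range_succ, ih]; push_cast; ring

lemma s2q (n : ℕ) : ∑ i ∈ range n, ((i:ℚ)+1)^2 = (n*(n+1)*(2*n+1)/6 : ℚ) := by
  induction n with
  | zero => simp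
  | succ m ih => rw [Finset.sum_range_succ, ih]; push_cast; ring

lemma classSize_eq (n : ℕ) (hn : 3 ≤ n)
    (c : Option (Fin n ⊕ Fin n) → Fin (n + 1))
    (hsurj : Function.Surjective c)
    (hequit : ∀ i j : Fin (n + 1), classSize c i ≤ classSize c j + 1)
    (hmono : ∀ i j : Fin (n + 1), i ≤ j → classSize c j ≤ classSize c i) :
    ∀ i : Fin (n+1), classSize c i = if i.val < n then 2 else 1 := by
  have hcard : Fintype.card (Option (Fin n ⊕ Fin n)) = 2 * n + 1 := by
    simp; ring
  have hsum : ∑ i : Fin (n+1), classSize c i = 2 * n + 1 := by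
    rw [← hcard, ← Finset.card_univ,
      Finset.card_eq_sum_card_fiberwise (fun x _ => Finset.mem_univ (c x))]
    rfl
  have h1 : ∀ i, 1 ≤ classSize c i := by
    intro i
    obtain ⟨v, hv⟩ := hsurj i
    have : v ∈ Finset.univ.filter (fun v => c v = i) := by simp [hv]
    exact Finset.card_pos.mpr ⟨v, this⟩
  have h2 : ∀ i, classSize c i ≤ 2 := by
    intro i
    by_contra h
    push_neg at h
    have hall : ∀ j : Fin (n+1), 2 ≤ classSize c j := fun j => by
      have := hequit i j; omega
    have : (2 * (n + 1) : ℕ) ≤ ∑ j : Fin (n+1), classSize c j := by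
      calc (2 * (n+1) : ℕ) = ∑ _j : Fin (n+1), 2 := by simp [mul_comm]
        _ ≤ _ := Finset.sum_le_sum (fun j _ => hall j)
    omega
  have hlast : classSize c ⟨n, by omega⟩ = 1 := by
    by_contra h
    have h2' : classSize c ⟨n, by omega⟩ = 2 := by
      have := h1 ⟨n, by omega⟩; have := h2 ⟨n, by omega⟩; omega
    have hall : ∀ j : Fin (n+1), 2 ≤ classSize c j := fun j => by
      have hj : j ≤ (⟨n, by omega⟩ : Fin (n+1)) := by
        rw [Fin.le_def]; simp; omega
      have := hmono j ⟨n, by omega⟩ hj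
      omega
    have : (2 * (n + 1) : ℕ) ≤ ∑ j : Fin (n+1), classSize c j := by
      calc (2 * (n+1) : ℕ) = ∑ _j : Fin (n+1), 2 := by simp [mul_comm]
        _ ≤ _ := Finset.sum_le_sum (fun j _ => hall j)
    omega
  intro i
  by_cases hi : i.val < n
  · simp only [hi, if_true]
    by_contra h
    have hi1 : classSize c i = 1 := by have := h1 i; have := h2 i; omega
    have hb : ∑ j : Fin (n+1), classSize c j
        ≤ ∑ j : Fin (n+1), (if j.val < i.val then 2 else 1) := by
      apply Finset.sum_le_sum
      intro j _
      by_cases hj : j.val < i.val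
      · simp [hj, h2 j]
      · simp only [hj, if_neg, if_false]
        have hij : i ≤ j := by
          have : i.val ≤ j.val := by omega
          exact this
        have := hmono i j hij
        omega
    have hrhs : ∑ j : Fin (n+1), (if j.val < i.val then 2 else 1) = (n + 1) + i.val := by
      rw [Fin.sum_univ_eq_sum_range (fun j => if j < i.val then 2 else 1)]
      rw [Finset.sum_ite]
      have hf : (Finset.range (n+1)).filter (fun j => j < i.val) = Finset.range i.val := by
        ext j; simp; omega
      have hf2 : (Finset.range (n+1)).filter (fun j => ¬ j < i.val)
          = Finset.Ico i.val (n+1) := by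
        ext j; simp; omega
      rw [hf, hf2]
      simp [Nat.card_Ico, Finset.card_range]
      omega
    omega
  · simp only [hi, if_false]
    have : i = ⟨n, by omega⟩ := by
      apply Fin.ext; simp; omega
    rw [this]; exact hlast

theorem flower_eqVar (n : ℕ) (hn : 3 ≤ n)
    (c : Option (Fin n ⊕ Fin n) → Fin (n + 1))
    (hproper : ∀ u v, (flowerGraph n).Adj u v → c u ≠ c v)
    (hsurj : Function.Surjective c)
    (hequit : ∀ i j : Fin (n + 1), classSize c i ≤ classSize c j + 1)
    (hmono : ∀ i j : Fin (n + 1), i ≤ j → classSize c j ≤ classSize c i) :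
    eqVar c = ((n : ℚ) ^ 4 + 2 * (n : ℚ) ^ 3 + 2 * (n : ℚ) ^ 2 + (n : ℚ))
      / (3 * (2 * (n : ℚ) + 1) ^ 2) := by
  have hθ := classSize_eq n hn c hsurj hequit hmono
  have hcard : Fintype.card (Option (Fin n ⊕ Fin n)) = 2 * n + 1 := by
    simp; ring
  have hA : ∑ i : Fin (n+1), (((i : ℕ) : ℚ) + 1) * (classSize c i : ℚ)
      = ((n:ℚ)+1)^2 := by
    simp only [hθ]
    rw [Fin.sum_univ_eq_sum_range (fun i => ((i:ℚ)+1) * ((if i < n then 2 else 1 : ℕ) : ℚ))]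
    rw [Finset.sum_range_succ]
    simp only [lt_irrefl, if_neg, if_false]
    have : ∑ i ∈ range n, ((i:ℚ)+1) * ((if i < n then 2 else 1 : ℕ) : ℚ)
        = ∑ i ∈ range n, ((i:ℚ)+1) * 2 := by
      apply Finset.sum_congr rfl
      intro i hi
      rw [Finset.mem_range] at hi
      simp [hi]
    rw [this, ← Finset.sum_mul, s1q]
    push_cast
    ring
  have hB : ∑ i : Fin (n+1), (((i : ℕ) : ℚ) + 1)^2 * (classSize c i : ℚ)
      = (n:ℚ)*((n:ℚ)+1)*(2*(n:ℚ)+1)/3 + ((n:ℚ)+1)^2 := by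
    simp only [hθ]
    rw [Fin.sum_univ_eq_sum_range (fun i => ((i:ℚ)+1)^2 * ((if i < n then 2 else 1 : ℕ) : ℚ))]
    rw [Finset.sum_range_succ]
    simp only [lt_irrefl, if_neg, if_false]
    have : ∑ i ∈ range n, ((i:ℚ)+1)^2 * ((if i < n then 2 else 1 : ℕ) : ℚ)
        = ∑ i ∈ range n, ((i:ℚ)+1)^2 * 2 := by
      apply Finset.sum_congr rfl
      intro i hi
      rw [Finset.mem_range] at hi
      simp [hi]
    rw [this, ← Finset.sum_mul, s2q]
    push_cast
    ring
  have hne : (2*(n:ℚ)+1) ≠ 0 := by positivity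
  rw [eqVar, eqMean, hA, hB, hcard]
  push_cast
  field_simp
  ring
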